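/- Let $A, B, X \in \mathbb{M}_n$ be such that the block matrix $M = \begin{bmatrix} A & X \\ X^* & B \end{bmatrix} \in \mathbb{M}_{2n}$ is positive semi-definite, and let $1 \le p < \infty$. Then $\| M \|_p \le 2^{1 - 1/p} \left( \| A \|_p^p + \| B \|_p^p \right)^{1/p}$, where $\|\cdot\|_p$ denotes the Schatten $p$-norm. -/

import Mathlib

open Matrix
open scoped ComplexOrder

/-- The absolute value `|Z| = (Zᴴ Z)^(1/2)` of a square complex matrix. -/
noncomputable def matAbs {m : Type*} [Fintype m] [DecidableEq m]
    (Z : Matrix m m ℂ) : Matrix m m ℂ :=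
  (Matrix.posSemidef_conjTranspose_mul_self Z).1.eigenvectorUnitary.1 *
    Matrix.diagonal (((↑) : ℝ → ℂ) ∘ (Real.sqrt ·) ∘ (Matrix.posSemidef_conjTranspose_mul_self Z).1.eigenvalues) *
    (star (Matrix.posSemidef_conjTranspose_mul_self Z).1.eigenvectorUnitary : Matrix m m ℂ)

/-- Functional calculus: apply `f : ℝ → ℝ` to the eigenvalues of a Hermitian matrix
(junk value `0` if the matrix is not Hermitian). -/
noncomputable def hermApply {m : Type*} [Fintype m] [DecidableEq m]
    (f : ℝ → ℝ) (S : Matrix m m ℂ) : Matrix m m ℂ :=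
  if hS : S.IsHermitian then
    (hS.eigenvectorUnitary : Matrix m m ℂ) *
      Matrix.diagonal (fun i => (f (hS.eigenvalues i) : ℂ)) *
      (star (hS.eigenvectorUnitary : Matrix m m ℂ))
  else 0

/-- Real power of a positive semi-definite matrix by functional calculus. -/
noncomputable def matPow {m : Type*} [Fintype m] [DecidableEq m]
    (S : Matrix m m ℂ) (p : ℝ) : Matrix m m ℂ :=
  hermApply (fun x => x ^ p) S

/-- A symmetric (unitarily invariant) norm on complex `m × m` matrices. -/
structure IsSymmetricNorm {m : Type*} [Fintype m] [DecidableEq m]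
    (N : Matrix m m ℂ → ℝ) : Prop where
  add_le : ∀ A B, N (A + B) ≤ N A + N B
  smul : ∀ (c : ℂ) (A), N (c • A) = ‖c‖ * N A
  eq_zero_of : ∀ A, N A = 0 → A = 0
  unitary_mul_left : ∀ (U : Matrix.unitaryGroup m ℂ) (A), N (U * A) = N A
  mul_unitary_right : ∀ (U : Matrix.unitaryGroup m ℂ) (A), N (A * U) = N A

/-- Eigenvalues of a Hermitian matrix (junk value `0` if not Hermitian). -/
noncomputable def eigVals {m : Type*} [Fintype m] [DecidableEq m]
    (Z : Matrix m m ℂ) : m → ℝ :=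
  if hZ : Z.IsHermitian then hZ.eigenvalues else 0

/-- Eigenvalues of a Hermitian `n × n` matrix listed in decreasing order. -/
noncomputable def eigDown {n : ℕ} (Z : Matrix (Fin n) (Fin n) ℂ) : Fin n → ℝ :=
  fun i => (eigVals Z ∘ Tuple.sort (eigVals Z)) i.rev

/-- `Z ^ ↓`: the diagonal matrix listing the eigenvalues of `Z` in decreasing order. -/
noncomputable def downMat {n : ℕ} (Z : Matrix (Fin n) (Fin n) ℂ) : Matrix (Fin n) (Fin n) ℂ :=
  Matrix.diagonal (fun i => (eigDown Z i : ℂ))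

/-- Schatten `p`-norm. -/
noncomputable def schattenNorm {m : Type*} [Fintype m] [DecidableEq m]
    (p : ℝ) (Z : Matrix m m ℂ) : ℝ :=
  (∑ i, eigVals (matAbs Z) i ^ p) ^ (1 / p)

/-- Operator norm (largest singular value). -/
noncomputable def opNormInf {m : Type*} [Fintype m] [DecidableEq m]
    (Z : Matrix m m ℂ) : ℝ :=
  ⨆ i, Real.sqrt (eigVals (Zᴴ * Z) i)

/-- Numerical range. -/
def numRange {m : Type*} [Fintype m] (X : Matrix m m ℂ) : Set ℂ :=
  {z | ∃ x : m → ℂ, ∑ i, ‖x i‖ ^ 2 = 1 ∧ dotProduct (star x) (X *ᵥ x) = z}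

/-- Numerical radius. -/
noncomputable def numRadius {m : Type*} [Fintype m] (X : Matrix m m ℂ) : ℝ :=
  sSup ((‖·‖) '' numRange X)

/-!
Factor the positive block matrix as `M = Sᴴ S` and split `S = [C₁ C₂]` by columns, so that
`A = C₁ᴴ C₁` and `B = C₂ᴴ C₂`. As `Cᴴ C` and `C Cᴴ` have the same nonzero eigenvalues, it suffices
to bound `‖S Sᴴ‖_p = ‖C₁ C₁ᴴ + C₂ C₂ᴴ‖_p` by `‖C₁ C₁ᴴ‖_p` and `‖C₂ C₂ᴴ‖_p`. For positive `P`, `Q`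
and an orthonormal eigenbasis `(uᵢ)` of `P + Q`, the eigenvalues of `P + Q` are
`⟪uᵢ, P uᵢ⟫ + ⟪uᵢ, Q uᵢ⟫`; now use `(a + b)^p ≤ 2^(p-1) (a^p + b^p)` and Peierls' inequality
`∑ᵢ ⟪uᵢ, P uᵢ⟫^p ≤ tr P^p`.
-/

namespace Matrix.IsHermitian

variable {𝕜 n : Type*} [RCLike 𝕜] [Fintype n] [DecidableEq n] {S : Matrix n n 𝕜}

open Polynomial in
theorem sum_map_eigenvalues_eq_sum_roots_charpoly (hS : S.IsHermitian) (f : ℝ → ℝ) :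
    ∑ i, f (hS.eigenvalues i) = (S.charpoly.roots.map (f ∘ RCLike.re)).sum := by
  simp [hS.roots_charpoly_eq_eigenvalues, Multiset.map_map]

theorem re_dotProduct_mulVec_eq_sum (hS : S.IsHermitian) (x : EuclideanSpace 𝕜 n) :
    RCLike.re (star ⇑x ⬝ᵥ S *ᵥ ⇑x) =
      ∑ j, hS.eigenvalues j * ‖inner 𝕜 (hS.eigenvectorBasis j) x‖ ^ 2 := by
  set u := hS.eigenvectorBasis
  have hSx : S *ᵥ ⇑x = ∑ j, (inner 𝕜 (u j) x * hS.eigenvalues j) • ⇑(u j) := by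
    conv_lhs => rw [← u.sum_repr' x]
    simp only [WithLp.ofLp_sum, WithLp.ofLp_smul, mulVec_sum, mulVec_smul,
      hS.mulVec_eigenvectorBasis, u, RCLike.real_smul_eq_coe_smul (K := 𝕜), smul_smul]
  rw [hSx, dotProduct_sum, map_sum]
  refine Finset.sum_congr rfl fun j _ => ?_
  rw [dotProduct_smul, dotProduct_comm, ← EuclideanSpace.inner_eq_star_dotProduct,
    ← inner_conj_symm x (u j), smul_eq_mul, mul_right_comm, RCLike.mul_conj]
  simp [mul_comm]

/-- Peierls' inequality. The weights `‖⟪uⱼ, bᵢ⟫‖²`, with `(uⱼ)` an eigenbasis of `S`, form a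
doubly stochastic matrix, so Jensen's inequality applies to each row. -/
theorem sum_map_re_dotProduct_le {ι : Type*} [Fintype ι] (hS : S.IsHermitian)
    (b : OrthonormalBasis ι 𝕜 (EuclideanSpace 𝕜 n)) {s : Set ℝ} {f : ℝ → ℝ}
    (hf : ConvexOn ℝ s f) (hs : ∀ j, hS.eigenvalues j ∈ s) :
    ∑ i, f (RCLike.re (star ⇑(b i) ⬝ᵥ S *ᵥ ⇑(b i))) ≤ ∑ j, f (hS.eigenvalues j) := by
  set u := hS.eigenvectorBasis
  set w : ι → n → ℝ := fun i j => ‖inner 𝕜 (u j) (b i)‖ ^ 2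
  have hrow : ∀ i, ∑ j, w i j = 1 := fun i => by
    simp [w, u.sum_sq_norm_inner_right, b.orthonormal.1 i]
  have hcol : ∀ j, ∑ i, w i j = 1 := fun j => by
    simp [w, b.sum_sq_norm_inner_left, u.orthonormal.1 j]
  calc ∑ i, f (RCLike.re (star ⇑(b i) ⬝ᵥ S *ᵥ ⇑(b i)))
      = ∑ i, f (∑ j, w i j • hS.eigenvalues j) := by
        simp only [hS.re_dotProduct_mulVec_eq_sum, smul_eq_mul, mul_comm, w, u]
    _ ≤ ∑ i, ∑ j, w i j • f (hS.eigenvalues j) :=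
        Finset.sum_le_sum fun i _ =>
          hf.map_sum_le (fun j _ => by positivity) (hrow i) (fun j _ => hs j)
    _ = ∑ j, f (hS.eigenvalues j) := by
        rw [Finset.sum_comm]
        simp only [smul_eq_mul, ← Finset.sum_mul, hcol, one_mul]

end Matrix.IsHermitian

open scoped MatrixOrder in
theorem Matrix.PosSemidef.exists_eq_conjTranspose_mul_self {𝕜 n : Type*} [RCLike 𝕜]
    [Fintype n] [DecidableEq n] {M : Matrix n n 𝕜} (hM : M.PosSemidef) :
    ∃ S : Matrix n n 𝕜, M = Sᴴ * S :=
  CStarAlgebra.nonneg_iff_eq_star_mul_self.mp hM.nonneg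

theorem Real.rpow_add_le_mul_rpow_add_rpow {a b p : ℝ} (ha : 0 ≤ a) (hb : 0 ≤ b) (hp : 1 ≤ p) :
    (a + b) ^ p ≤ 2 ^ (p - 1) * (a ^ p + b ^ p) := by
  lift a to NNReal using ha
  lift b to NNReal using hb
  exact_mod_cast NNReal.rpow_add_le_mul_rpow_add_rpow a b hp

section eigVals

variable {m : Type*} [Fintype m] [DecidableEq m]

theorem eigVals_of_isHermitian {Z : Matrix m m ℂ} (hZ : Z.IsHermitian) :
    eigVals Z = hZ.eigenvalues :=
  dif_pos hZ

theorem sum_rpow_eigVals_nonneg {Z : Matrix m m ℂ} (hZ : Z.PosSemidef) (p : ℝ) :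
    0 ≤ ∑ i, eigVals Z i ^ p :=
  Finset.sum_nonneg fun i _ =>
    Real.rpow_nonneg (eigVals_of_isHermitian hZ.1 ▸ hZ.eigenvalues_nonneg i) p

open Polynomial in
theorem sum_map_eigVals_mul_conjTranspose_self {k : Type*} [Fintype k] [DecidableEq k]
    (C : Matrix k m ℂ) {f : ℝ → ℝ} (hf : f 0 = 0) :
    ∑ i, f (eigVals (C * Cᴴ) i) = ∑ j, f (eigVals (Cᴴ * C) j) := by
  rw [eigVals_of_isHermitian (isHermitian_mul_conjTranspose_self C),
    eigVals_of_isHermitian (isHermitian_conjTranspose_mul_self C),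
    IsHermitian.sum_map_eigenvalues_eq_sum_roots_charpoly,
    IsHermitian.sum_map_eigenvalues_eq_sum_roots_charpoly]
  have h := congrArg (fun q : ℂ[X] => (q.roots.map (f ∘ RCLike.re)).sum)
    (charpoly_mul_comm' C Cᴴ)
  simpa [roots_mul, (charpoly_monic _).ne_zero, X_ne_zero, Multiset.nsmul_singleton, hf] using h

theorem sum_rpow_eigVals_add_le {P Q : Matrix m m ℂ} (hP : P.PosSemidef) (hQ : Q.PosSemidef)
    {p : ℝ} (hp : 1 ≤ p) :
    ∑ i, eigVals (P + Q) i ^ p ≤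
      2 ^ (p - 1) * (∑ i, eigVals P i ^ p + ∑ i, eigVals Q i ^ p) := by
  have hPQ := (hP.add hQ).1
  set u := hPQ.eigenvectorBasis
  have hsplit : ∀ i, eigVals (P + Q) i =
      RCLike.re (star ⇑(u i) ⬝ᵥ P *ᵥ ⇑(u i)) + RCLike.re (star ⇑(u i) ⬝ᵥ Q *ᵥ ⇑(u i)) := by
    intro i
    rw [eigVals_of_isHermitian hPQ, hPQ.eigenvalues_eq, add_mulVec, dotProduct_add, map_add]
  have hconvex := convexOn_rpow hp
  calc ∑ i, eigVals (P + Q) i ^ p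
      ≤ ∑ i, 2 ^ (p - 1) * (RCLike.re (star ⇑(u i) ⬝ᵥ P *ᵥ ⇑(u i)) ^ p +
          RCLike.re (star ⇑(u i) ⬝ᵥ Q *ᵥ ⇑(u i)) ^ p) :=
        Finset.sum_le_sum fun i _ => hsplit i ▸
          Real.rpow_add_le_mul_rpow_add_rpow (hP.re_dotProduct_nonneg _)
            (hQ.re_dotProduct_nonneg _) hp
    _ = 2 ^ (p - 1) * (∑ i, RCLike.re (star ⇑(u i) ⬝ᵥ P *ᵥ ⇑(u i)) ^ p +
          ∑ i, RCLike.re (star ⇑(u i) ⬝ᵥ Q *ᵥ ⇑(u i)) ^ p) := by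
        rw [← Finset.mul_sum, Finset.sum_add_distrib]
    _ ≤ 2 ^ (p - 1) * (∑ i, eigVals P i ^ p + ∑ i, eigVals Q i ^ p) := by
        rw [eigVals_of_isHermitian hP.1, eigVals_of_isHermitian hQ.1]
        exact mul_le_mul_of_nonneg_left
          (add_le_add (hP.1.sum_map_re_dotProduct_le u hconvex hP.eigenvalues_nonneg)
            (hQ.1.sum_map_re_dotProduct_le u hconvex hQ.eigenvalues_nonneg))
          (by positivity)

theorem sum_rpow_eigVals_fromCols_le {k m' : Type*} [Fintype k] [DecidableEq k] [Fintype m']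
    [DecidableEq m'] (C₁ : Matrix k m ℂ) (C₂ : Matrix k m' ℂ) {p : ℝ} (hp : 1 ≤ p) :
    ∑ i, eigVals ((fromCols C₁ C₂)ᴴ * fromCols C₁ C₂) i ^ p ≤
      2 ^ (p - 1) * (∑ i, eigVals (C₁ᴴ * C₁) i ^ p + ∑ i, eigVals (C₂ᴴ * C₂) i ^ p) := by
  have hzero : (0 : ℝ) ^ p = 0 := Real.zero_rpow (by positivity)
  calc ∑ i, eigVals ((fromCols C₁ C₂)ᴴ * fromCols C₁ C₂) i ^ p
      = ∑ i, eigVals (C₁ * C₁ᴴ + C₂ * C₂ᴴ) i ^ p := by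
        rw [← fromCols_mul_fromRows, ← conjTranspose_fromCols_eq_fromRows_conjTranspose]
        exact (sum_map_eigVals_mul_conjTranspose_self _ (f := (· ^ p)) hzero).symm
    _ ≤ 2 ^ (p - 1) * (∑ i, eigVals (C₁ * C₁ᴴ) i ^ p + ∑ i, eigVals (C₂ * C₂ᴴ) i ^ p) :=
        sum_rpow_eigVals_add_le (posSemidef_self_mul_conjTranspose C₁)
          (posSemidef_self_mul_conjTranspose C₂) hp
    _ = 2 ^ (p - 1) * (∑ i, eigVals (C₁ᴴ * C₁) i ^ p + ∑ i, eigVals (C₂ᴴ * C₂) i ^ p) := by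
        rw [sum_map_eigVals_mul_conjTranspose_self C₁ (f := (· ^ p)) hzero,
          sum_map_eigVals_mul_conjTranspose_self C₂ (f := (· ^ p)) hzero]

theorem sum_rpow_eigVals_fromBlocks_le {m' : Type*} [Fintype m'] [DecidableEq m']
    {A : Matrix m m ℂ} {B : Matrix m' m' ℂ} {X : Matrix m m' ℂ}
    (hM : (fromBlocks A X Xᴴ B).PosSemidef) {p : ℝ} (hp : 1 ≤ p) :
    ∑ i, eigVals (fromBlocks A X Xᴴ B) i ^ p ≤
      2 ^ (p - 1) * (∑ i, eigVals A i ^ p + ∑ i, eigVals B i ^ p) := by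
  obtain ⟨S, hS⟩ := hM.exists_eq_conjTranspose_mul_self
  rw [← fromCols_toCols S, conjTranspose_fromCols_eq_fromRows_conjTranspose,
    fromRows_mul_fromCols] at hS
  obtain ⟨hA, -, -, hB⟩ := fromBlocks_inj.mp hS
  rw [hS, ← fromRows_mul_fromCols, ← conjTranspose_fromCols_eq_fromRows_conjTranspose, hA, hB]
  exact sum_rpow_eigVals_fromCols_le S.toCols₁ S.toCols₂ hp

open scoped MatrixOrder in
theorem matAbs_of_posSemidef {Z : Matrix m m ℂ} (hZ : Z.PosSemidef) : matAbs Z = Z := by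
  have hZZ : 0 ≤ Z * Z := by
    simpa only [hZ.1.eq] using (posSemidef_conjTranspose_mul_self Z).nonneg
  calc matAbs Z = cfc Real.sqrt (Zᴴ * Z) := by
        rw [(posSemidef_conjTranspose_mul_self Z).1.cfc_eq, IsHermitian.cfc,
          Unitary.conjStarAlgAut_apply]
        rfl
    _ = CFC.sqrt (Z * Z) := by rw [hZ.1, CFC.sqrt_eq_real_sqrt _ hZZ, cfcₙ_eq_cfc]
    _ = Z := CFC.sqrt_mul_self Z hZ.nonneg

theorem schattenNorm_of_posSemidef {Z : Matrix m m ℂ} (hZ : Z.PosSemidef) (p : ℝ) :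
    schattenNorm p Z = (∑ i, eigVals Z i ^ p) ^ (1 / p) := by
  rw [schattenNorm, matAbs_of_posSemidef hZ]

theorem schattenNorm_rpow_of_posSemidef {Z : Matrix m m ℂ} (hZ : Z.PosSemidef) {p : ℝ}
    (hp : p ≠ 0) : schattenNorm p Z ^ p = ∑ i, eigVals Z i ^ p := by
  rw [schattenNorm_of_posSemidef hZ, ← Real.rpow_mul (sum_rpow_eigVals_nonneg hZ p), one_div,
    inv_mul_cancel₀ hp, Real.rpow_one]

end eigVals

theorem schatten_norm_bound {n : ℕ} (A B X : Matrix (Fin n) (Fin n) ℂ)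
    (hM : (Matrix.fromBlocks A X Xᴴ B).PosSemidef)
    (p : ℝ) (hp : 1 ≤ p) :
    schattenNorm p (Matrix.fromBlocks A X Xᴴ B) ≤
      (2 : ℝ) ^ (1 - 1 / p) * (schattenNorm p A ^ p + schattenNorm p B ^ p) ^ (1 / p) := by
  have hp0 : p ≠ 0 := (zero_lt_one.trans_le hp).ne'
  have hA : A.PosSemidef := hM.submatrix Sum.inl
  have hB : B.PosSemidef := hM.submatrix Sum.inr
  have hAB := add_nonneg (sum_rpow_eigVals_nonneg hA p) (sum_rpow_eigVals_nonneg hB p)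
  rw [schattenNorm_of_posSemidef hM, schattenNorm_rpow_of_posSemidef hA hp0,
    schattenNorm_rpow_of_posSemidef hB hp0]
  calc (∑ i, eigVals (fromBlocks A X Xᴴ B) i ^ p) ^ (1 / p)
      ≤ (2 ^ (p - 1) * (∑ i, eigVals A i ^ p + ∑ i, eigVals B i ^ p)) ^ (1 / p) :=
        Real.rpow_le_rpow (sum_rpow_eigVals_nonneg hM p)
          (sum_rpow_eigVals_fromBlocks_le hM hp) (by positivity)
    _ = 2 ^ (1 - 1 / p) * (∑ i, eigVals A i ^ p + ∑ i, eigVals B i ^ p) ^ (1 / p) := by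
        rw [Real.mul_rpow (by positivity) hAB, ← Real.rpow_mul zero_le_two]
        congr 2
        field_simp
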